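/- arXiv:1109.4314 — 5 statements merged into one kernel-verified Lean document; each statement's English description precedes it below -/
import Mathlib

section
/- For every integer p ≥ 2, the limit as K → ∞ of Λ_p(K) := ∑_{ℓ=0}^{K−p} ℓ(K−ℓ−1)/(K(K−ℓ)·2^{K−ℓ}) equals −ln 2 + 2^{1−p} + ∑_{n=1}^{p−1} 1/(n·2^n). -/
open Filter Finset

/-!
Writing `m = K - ℓ`, the `ℓ`-th term is `(K - m)(m - 1) / (K m 2^m)`, which splits as
`(1/2)^m - (1/2)^m / m` minus `(m - 1)(1/2)^m / K`. The partial sums of the first part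
converge to the tails from `m = p` of the geometric series `∑ (1/2)^m = 1` and of the
logarithmic series `∑ (1/2)^m / m = log 2`, while the second part is a bounded sum divided by `K`.
-/

lemma hasSum_pow_add {x : ℝ} (hx : |x| < 1) (p : ℕ) :
    HasSum (fun j : ℕ => x ^ (p + j)) (x ^ p / (1 - x)) := by
  simpa only [pow_add, div_eq_mul_inv] using
    (hasSum_geometric_of_abs_lt_one hx).mul_left (x ^ p)

lemma hasSum_pow_add_div {x : ℝ} (hx : |x| < 1) {p : ℕ} (hp : 1 ≤ p) :
    HasSum (fun j : ℕ => x ^ (p + j) / (p + j))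
      (-Real.log (1 - x) - ∑ n ∈ range (p - 1), x ^ (n + 1) / (n + 1)) := by
  have hshift (j : ℕ) :
      x ^ (j + (p - 1) + 1) / (((j + (p - 1) : ℕ) : ℝ) + 1) = x ^ (p + j) / (p + j) := by
    rw [show j + (p - 1) + 1 = p + j by omega]
    push_cast [Nat.cast_sub hp]
    ring
  simpa only [hshift] using
    (hasSum_nat_add_iff' (p - 1)).mpr (Real.hasSum_pow_div_log_of_abs_lt_one hx)

lemma summable_add_sub_one_mul_pow {x : ℝ} (hx : |x| < 1) (p : ℕ) :
    Summable (fun j : ℕ => ((p : ℝ) + j - 1) * x ^ (p + j)) := by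
  have hmul : Summable (fun n : ℕ => (n : ℝ) * x ^ n) := by
    simpa using summable_pow_mul_geometric_of_norm_lt_one 1 (by rwa [Real.norm_eq_abs])
  refine ((summable_nat_add_iff p).mpr (hmul.sub (summable_geometric_of_abs_lt_one hx))).congr
    fun j => ?_
  simp only [add_comm j p]
  push_cast
  ring

lemma tendsto_sum_range_sub_sum_range_div {a b : ℕ → ℝ} {L : ℝ} (ha : HasSum a L)
    (hb : Summable b) {N : ℕ → ℕ} (hN : Tendsto N atTop atTop) :
    Tendsto (fun K : ℕ => ∑ j ∈ range (N K), a j - (∑ j ∈ range (N K), b j) / K)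
      atTop (nhds L) := by
  simpa using (ha.tendsto_sum_nat.comp hN).sub
    ((hb.hasSum.tendsto_sum_nat.comp hN).div_atTop tendsto_natCast_atTop_atTop)

lemma lambda_term_eq_of_le {K m : ℕ} (hm : 0 < m) (hmK : m ≤ K) :
    ((K - m : ℕ) : ℝ) * ((K : ℝ) - (K - m : ℕ) - 1) /
        ((K : ℝ) * ((K : ℝ) - (K - m : ℕ)) * 2 ^ (K - (K - m))) =
      (1 / 2 : ℝ) ^ m - (1 / 2 : ℝ) ^ m / m - ((m : ℝ) - 1) * (1 / 2) ^ m / K := by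
  rw [Nat.sub_sub_self hmK, Nat.cast_sub hmK, sub_sub_cancel, one_div, inv_pow]
  have hm' : (m : ℝ) ≠ 0 := by positivity
  have hK : (K : ℝ) ≠ 0 := by exact_mod_cast (hm.trans_le hmK).ne'
  field_simp

lemma lambda_sum_eq_sum_sub_sum_div {p K : ℕ} (hp : 1 ≤ p) (hK : p ≤ K) :
    ∑ ℓ ∈ range (K - p + 1),
        (ℓ : ℝ) * ((K : ℝ) - ℓ - 1) / ((K : ℝ) * ((K : ℝ) - ℓ) * 2 ^ (K - ℓ)) =
      ∑ j ∈ range (K - p + 1), ((1 / 2 : ℝ) ^ (p + j) - (1 / 2 : ℝ) ^ (p + j) / (p + j)) -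
        (∑ j ∈ range (K - p + 1), ((p : ℝ) + j - 1) * (1 / 2) ^ (p + j)) / K := by
  rw [← sum_range_reflect, sum_div, ← sum_sub_distrib]
  refine sum_congr rfl fun j hj => ?_
  rw [mem_range] at hj
  rw [show K - p + 1 - 1 - j = K - (p + j) by omega,
    lambda_term_eq_of_le (by omega) (by omega)]
  push_cast
  ring

/-- For every integer `p ≥ 2`,
`Λ_p(K) := ∑_{ℓ=0}^{K−p} ℓ(K−ℓ−1)/(K(K−ℓ)·2^{K−ℓ})` tends, as `K → ∞`, to
`−ln 2 + 2^{1−p} + ∑_{n=1}^{p−1} 1/(n·2^n)`. -/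
theorem stmt_5 (p : ℕ) (hp : 2 ≤ p) :
    Tendsto
      (fun K : ℕ => ∑ ℓ ∈ Finset.range (K - p + 1),
        (ℓ : ℝ) * ((K : ℝ) - ℓ - 1) / ((K : ℝ) * ((K : ℝ) - ℓ) * 2 ^ (K - ℓ)))
      atTop
      (nhds (-Real.log 2 + (2 : ℝ) ^ ((1 : ℤ) - p) +
        ∑ n ∈ Finset.range (p - 1), 1 / (((n : ℝ) + 1) * 2 ^ (n + 1)))) := by
  have hp1 : 1 ≤ p := by omega
  have hx : |(1 / 2 : ℝ)| < 1 := by norm_num [abs_of_pos]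
  have hmain := (hasSum_pow_add hx p).sub (hasSum_pow_add_div hx hp1)
  have hlimit : (1 / 2 : ℝ) ^ p / (1 - 1 / 2) -
      (-Real.log (1 - 1 / 2) - ∑ n ∈ range (p - 1), (1 / 2 : ℝ) ^ (n + 1) / (n + 1)) =
      -Real.log 2 + (2 : ℝ) ^ ((1 : ℤ) - p) +
        ∑ n ∈ range (p - 1), 1 / (((n : ℝ) + 1) * 2 ^ (n + 1)) := by
    have hsum : ∑ n ∈ range (p - 1), (1 / 2 : ℝ) ^ (n + 1) / (n + 1) =
        ∑ n ∈ range (p - 1), 1 / (((n : ℝ) + 1) * 2 ^ (n + 1)) :=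
      sum_congr rfl fun n _ => by rw [one_div_pow, div_div, mul_comm]
    rw [hsum, zpow_sub₀ two_ne_zero, zpow_one, zpow_natCast,
      show (1 : ℝ) - 1 / 2 = 2⁻¹ by norm_num, Real.log_inv, one_div_pow]
    ring
  rw [← hlimit]
  refine (tendsto_sum_range_sub_sum_range_div hmain (summable_add_sub_one_mul_pow hx p)
    ((tendsto_add_atTop_nat 1).comp (tendsto_sub_atTop_nat p))).congr' ?_
  filter_upwards [eventually_ge_atTop p] with K hK
  exact (lambda_sum_eq_sum_sub_sum_div hp1 hK).symm
end

section
/- For every integer K ≥ 3, defining Ψ(K) = ∑_{ℓ₁=0}^{K−3} [(K−ℓ₁−1)(3ℓ₁²+ℓ₁−1)] / [2(K−ℓ₁)(4ℓ₁²−1)] · ∏_{ℓ₂=ℓ₁+1}^{K−2} ℓ₂/(2ℓ₂+1), the following strict inequalities hold: (3K/(2K−3))·Λ₃(K) < Ψ(K) < (3/2)·Γ₃(K) + (K−2)/(5(K−1)·2^K), where Γ₃(K) = ∑_{ℓ=0}^{K−3} (K−ℓ−1)/((K−ℓ)·2^{K−ℓ}) and Λ₃(K) = ∑_{ℓ=0}^{K−3}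 ℓ(K−ℓ−1)/(K(K−ℓ)·2^{K−ℓ}). -/
/-!
Write `Ψ(K) = ∑ w_ℓ c_ℓ P_ℓ` with `w_ℓ = (K-ℓ-1)/(K-ℓ)`, `c_ℓ = (3ℓ²+ℓ-1)/(2(4ℓ²-1))` and
`P_ℓ = ∏_{j=ℓ+1}^{K-2} j/(2j+1)`. Since `(1/2)·(2j-1)/(2j+1) ≤ j/(2j+1) ≤ 1/2`, the product is
squeezed between `2^{-(K-2-ℓ)}·(2ℓ+1)/(2K-3)` (a telescoping bound) and
`2^{-(K-3-ℓ)}·(ℓ+1)/(2ℓ+3)`. Both inequalities then hold term by term: the lower one reduces to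
`3ℓ/4 < c_ℓ (2ℓ+1)`, the upper one to `8 c_ℓ (ℓ+1)/(2ℓ+3) < 3/2`, which fails only at `ℓ = 1`,
where the excess `(8/5 - 3/2)·Γ-summand` is exactly the extra term `(K-2)/(5(K-1)2^K)`.
-/

open Finset

noncomputable def ratioProd (a b : ℕ) : ℝ := ∏ j ∈ Icc a b, (j : ℝ) / (2 * j + 1)

lemma natCast_div_two_mul_add_one_nonneg (j : ℕ) : 0 ≤ (j : ℝ) / (2 * j + 1) := by positivity

lemma natCast_div_two_mul_add_one_le_half (j : ℕ) : (j : ℝ) / (2 * j + 1) ≤ 1 / 2 := by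
  rw [div_le_div_iff₀ (by positivity) two_pos]
  linarith

lemma ratioProd_le {a b : ℕ} (h : a ≤ b) : ratioProd a b ≤ a / (2 * a + 1) / 2 ^ (b - a) := by
  calc ratioProd a b = a / (2 * a + 1) * ∏ j ∈ Icc (a + 1) b, (j : ℝ) / (2 * j + 1) := by
        rw [ratioProd, Icc_eq_cons_Ioc h, prod_cons, Icc_add_one_left_eq_Ioc]
    _ ≤ a / (2 * a + 1) * ∏ _j ∈ Icc (a + 1) b, (1 / 2 : ℝ) :=
        mul_le_mul_of_nonneg_left
          (prod_le_prod (fun j _ => natCast_div_two_mul_add_one_nonneg j)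
            (fun j _ => natCast_div_two_mul_add_one_le_half j))
          (natCast_div_two_mul_add_one_nonneg a)
    _ = a / (2 * a + 1) / 2 ^ (b - a) := by
        rw [prod_const, Nat.card_Icc, Nat.add_sub_add_right, one_div_pow, mul_one_div]

-- The factors `(2j-1)/(2j+1)` telescope.
lemma le_ratioProd {a b : ℕ} (ha : 1 ≤ a) (h : a ≤ b) :
    (2 * a - 1) / ((2 * b + 1) * 2 ^ (b + 1 - a)) ≤ ratioProd a b := by
  induction b, h using Nat.le_induction with
  | base =>
    rw [ratioProd, Icc_self, prod_singleton, Nat.add_sub_cancel_left, pow_one,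
      div_le_div_iff₀ (by positivity) (by positivity)]
    nlinarith
  | succ b hab ih =>
    rw [ratioProd, prod_Icc_succ_top (by omega), ← ratioProd,
      show b + 1 + 1 - a = b + 1 - a + 1 by omega, pow_succ]
    have h2a : (0 : ℝ) ≤ 2 * a - 1 := by
      have : (1 : ℝ) ≤ a := by exact_mod_cast ha
      linarith
    have hp : (0 : ℝ) < 2 ^ (b + 1 - a) := by positivity
    calc (2 * a - 1 : ℝ) / ((2 * ↑(b + 1) + 1) * (2 ^ (b + 1 - a) * 2))
        ≤ (2 * a - 1) / ((2 * b + 1) * 2 ^ (b + 1 - a)) * ((b + 1) / (2 * (b + 1) + 1)) := by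
          rw [div_mul_div_comm, div_le_div_iff₀ (by positivity) (by positivity)]
          push_cast
          nlinarith [mul_nonneg (mul_nonneg h2a hp.le) (by positivity : (0 : ℝ) ≤ 2 * b + 3)]
      _ ≤ ratioProd a b * ((↑(b + 1) : ℝ) / (2 * ↑(b + 1) + 1)) := by
          push_cast
          exact mul_le_mul_of_nonneg_right ih (by positivity)

noncomputable def psiCoeff (ℓ : ℕ) : ℝ := (3 * (ℓ : ℝ) ^ 2 + ℓ - 1) / (2 * (4 * (ℓ : ℝ) ^ 2 - 1))

-- At `ℓ = 0` numerator and denominator of `psiCoeff` are both negative.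
lemma psiCoeff_zero : psiCoeff 0 = 1 / 2 := by norm_num [psiCoeff]

lemma psiCoeff_one : psiCoeff 1 = 1 / 2 := by norm_num [psiCoeff]

lemma psiCoeff_pos (ℓ : ℕ) : 0 < psiCoeff ℓ := by
  rcases Nat.eq_zero_or_pos ℓ with rfl | hℓ
  · rw [psiCoeff_zero]; norm_num
  · have : (1 : ℝ) ≤ ℓ := by exact_mod_cast hℓ
    exact div_pos (by nlinarith) (by nlinarith)

lemma three_mul_div_four_lt_psiCoeff_mul (ℓ : ℕ) : 3 * (ℓ : ℝ) / 4 < psiCoeff ℓ * (2 * ℓ + 1) := by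
  rcases Nat.eq_zero_or_pos ℓ with rfl | hℓ
  · rw [psiCoeff_zero]; norm_num
  · have : (1 : ℝ) ≤ ℓ := by exact_mod_cast hℓ
    rw [psiCoeff, div_mul_eq_mul_div, div_lt_div_iff₀ (by norm_num) (by nlinarith)]
    nlinarith

lemma eight_mul_psiCoeff_mul_lt {ℓ : ℕ} (hℓ : ℓ ≠ 1) :
    8 * psiCoeff ℓ * ((ℓ + 1) / (2 * ℓ + 3)) < 3 / 2 := by
  rcases Nat.lt_or_ge ℓ 2 with hℓ2 | hℓ2
  · obtain rfl : ℓ = 0 := by omega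
    rw [psiCoeff_zero]; norm_num
  · have : (2 : ℝ) ≤ ℓ := by exact_mod_cast hℓ2
    have : (0 : ℝ) < 4 * ℓ ^ 2 - 1 := by nlinarith
    rw [mul_div_assoc', div_lt_iff₀ (by positivity), psiCoeff, mul_div_assoc',
      div_mul_eq_mul_div, div_lt_iff₀ (by positivity)]
    nlinarith

noncomputable def psiSummand (K ℓ : ℕ) : ℝ :=
  ((K : ℝ) - ℓ - 1) * (3 * (ℓ : ℝ) ^ 2 + ℓ - 1) / (2 * ((K : ℝ) - ℓ) * (4 * (ℓ : ℝ) ^ 2 - 1)) *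
    ∏ ℓ₂ ∈ Icc (ℓ + 1) (K - 2), (ℓ₂ : ℝ) / (2 * ℓ₂ + 1)

noncomputable def gammaSummand (K ℓ : ℕ) : ℝ := ((K : ℝ) - ℓ - 1) / (((K : ℝ) - ℓ) * 2 ^ (K - ℓ))

noncomputable def lambdaSummand (K ℓ : ℕ) : ℝ :=
  (ℓ : ℝ) * ((K : ℝ) - ℓ - 1) / ((K : ℝ) * ((K : ℝ) - ℓ) * 2 ^ (K - ℓ))

lemma psiSummand_eq (K ℓ : ℕ) :
    psiSummand K ℓ = ((K : ℝ) - ℓ - 1) / (K - ℓ) * psiCoeff ℓ * ratioProd (ℓ + 1) (K - 2) := by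
  rw [psiSummand, psiCoeff, ratioProd]
  generalize (K : ℝ) - ℓ = c
  generalize 4 * (ℓ : ℝ) ^ 2 - 1 = d
  ring

lemma gammaSummand_pos {K ℓ : ℕ} (h : ℓ + 2 ≤ K) : 0 < gammaSummand K ℓ := by
  have : (ℓ : ℝ) + 2 ≤ K := by exact_mod_cast h
  exact div_pos (by linarith) (mul_pos (by linarith) (by positivity))

lemma lambdaSummand_lt_psiSummand {K ℓ : ℕ} (h : ℓ + 3 ≤ K) :
    3 * (K : ℝ) / (2 * K - 3) * lambdaSummand K ℓ < psiSummand K ℓ := by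
  have hK : (ℓ : ℝ) + 3 ≤ K := by exact_mod_cast h
  have hP := le_ratioProd (a := ℓ + 1) (b := K - 2) (by omega) (by omega)
  rw [show K - 2 + 1 - (ℓ + 1) = K - 2 - ℓ by omega] at hP
  push_cast [Nat.cast_sub (by omega : 2 ≤ K)] at hP
  have h4q : (2 : ℝ) ^ (K - ℓ) = 4 * 2 ^ (K - 2 - ℓ) := by
    rw [show K - ℓ = 2 + (K - 2 - ℓ) by omega, pow_add]; norm_num
  set q : ℝ := 2 ^ (K - 2 - ℓ)
  have hq : 0 < q := by positivity
  have hw : 0 < ((K : ℝ) - ℓ - 1) / (K - ℓ) := div_pos (by linarith) (by linarith)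
  have hA : 0 < ((K : ℝ) - ℓ - 1) / (K - ℓ) / ((2 * K - 3) * q) :=
    div_pos hw (mul_pos (by linarith) hq)
  calc 3 * (K : ℝ) / (2 * K - 3) * lambdaSummand K ℓ
      = ((K : ℝ) - ℓ - 1) / (K - ℓ) / ((2 * K - 3) * q) * (3 * ℓ / 4) := by
        have : (K : ℝ) - ℓ ≠ 0 := by linarith
        have : (2 * K : ℝ) - 3 ≠ 0 := by linarith
        have : (K : ℝ) ≠ 0 := by linarith
        rw [lambdaSummand, h4q]
        field_simp
    _ < ((K : ℝ) - ℓ - 1) / (K - ℓ) / ((2 * K - 3) * q) * (psiCoeff ℓ * (2 * ℓ + 1)) :=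
        mul_lt_mul_of_pos_left (three_mul_div_four_lt_psiCoeff_mul ℓ) hA
    _ = ((K : ℝ) - ℓ - 1) / (K - ℓ) * psiCoeff ℓ *
          ((2 * (ℓ + 1) - 1) / ((2 * (K - 2) + 1) * q)) := by
        ring
    _ ≤ ((K : ℝ) - ℓ - 1) / (K - ℓ) * psiCoeff ℓ * ratioProd (ℓ + 1) (K - 2) :=
        mul_le_mul_of_nonneg_left hP (mul_nonneg hw.le (psiCoeff_pos ℓ).le)
    _ = psiSummand K ℓ := (psiSummand_eq K ℓ).symm

lemma psiSummand_le {K ℓ : ℕ} (h : ℓ + 3 ≤ K) :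
    psiSummand K ℓ ≤ 8 * psiCoeff ℓ * ((ℓ + 1) / (2 * ℓ + 3)) * gammaSummand K ℓ := by
  have hK : (ℓ : ℝ) + 3 ≤ K := by exact_mod_cast h
  have hP := ratioProd_le (a := ℓ + 1) (b := K - 2) (by omega)
  rw [show K - 2 - (ℓ + 1) = K - 3 - ℓ by omega] at hP
  push_cast at hP
  have h8 : (2 : ℝ) ^ (K - ℓ) = 8 * 2 ^ (K - 3 - ℓ) := by
    rw [show K - ℓ = 3 + (K - 3 - ℓ) by omega, pow_add]; norm_num
  have hw : 0 ≤ ((K : ℝ) - ℓ - 1) / (K - ℓ) := div_nonneg (by linarith) (by linarith)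
  calc psiSummand K ℓ
      = ((K : ℝ) - ℓ - 1) / (K - ℓ) * psiCoeff ℓ * ratioProd (ℓ + 1) (K - 2) := psiSummand_eq K ℓ
    _ ≤ ((K : ℝ) - ℓ - 1) / (K - ℓ) * psiCoeff ℓ *
          ((ℓ + 1) / (2 * (ℓ + 1) + 1) / 2 ^ (K - 3 - ℓ)) :=
        mul_le_mul_of_nonneg_left hP (mul_nonneg hw (psiCoeff_pos ℓ).le)
    _ = 8 * psiCoeff ℓ * ((ℓ + 1) / (2 * ℓ + 3)) * gammaSummand K ℓ := by
        have : (K : ℝ) - ℓ ≠ 0 := by linarith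
        rw [gammaSummand, h8]
        field_simp
        ring

lemma psiSummand_lt_gammaSummand {K ℓ : ℕ} (h : ℓ + 3 ≤ K) (hℓ : ℓ ≠ 1) :
    psiSummand K ℓ < 3 / 2 * gammaSummand K ℓ :=
  (psiSummand_le h).trans_lt
    (mul_lt_mul_of_pos_right (eight_mul_psiCoeff_mul_lt hℓ) (gammaSummand_pos (by omega)))

lemma psiSummand_one_le {K : ℕ} (h : 4 ≤ K) :
    psiSummand K 1 ≤ 3 / 2 * gammaSummand K 1 + ((K : ℝ) - 2) / (5 * ((K : ℝ) - 1) * 2 ^ K) := by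
  refine (psiSummand_le h).trans_eq ?_
  have h2 : (2 : ℝ) ^ K = 2 * 2 ^ (K - 1) := by
    rw [← pow_succ', Nat.sub_add_cancel (by omega)]
  have : (K : ℝ) - 1 ≠ 0 := by
    have : (4 : ℝ) ≤ K := by exact_mod_cast h
    linarith
  rw [psiCoeff_one, gammaSummand, h2]
  push_cast
  field_simp
  ring

/-- For every integer `K ≥ 3`, with
`Ψ(K) = ∑_{ℓ₁=0}^{K−3} (K−ℓ₁−1)(3ℓ₁²+ℓ₁−1)/(2(K−ℓ₁)(4ℓ₁²−1)) · ∏_{ℓ₂=ℓ₁+1}^{K−2} ℓ₂/(2ℓ₂+1)`,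
one has `(3K/(2K−3))·Λ₃(K) < Ψ(K) < (3/2)·Γ₃(K) + (K−2)/(5(K−1)·2^K)`. -/
theorem stmt_7 (K : ℕ) (hK : 3 ≤ K) :
    (3 * (K : ℝ) / (2 * (K : ℝ) - 3)) *
      (∑ ℓ ∈ Finset.range (K - 3 + 1),
        (ℓ : ℝ) * ((K : ℝ) - ℓ - 1) / ((K : ℝ) * ((K : ℝ) - ℓ) * 2 ^ (K - ℓ)))
    < (∑ ℓ₁ ∈ Finset.range (K - 3 + 1),
        ((K : ℝ) - ℓ₁ - 1) * (3 * (ℓ₁ : ℝ) ^ 2 + ℓ₁ - 1) /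
          (2 * ((K : ℝ) - ℓ₁) * (4 * (ℓ₁ : ℝ) ^ 2 - 1)) *
        ∏ ℓ₂ ∈ Finset.Icc (ℓ₁ + 1) (K - 2), (ℓ₂ : ℝ) / (2 * ℓ₂ + 1))
    ∧ (∑ ℓ₁ ∈ Finset.range (K - 3 + 1),
        ((K : ℝ) - ℓ₁ - 1) * (3 * (ℓ₁ : ℝ) ^ 2 + ℓ₁ - 1) /
          (2 * ((K : ℝ) - ℓ₁) * (4 * (ℓ₁ : ℝ) ^ 2 - 1)) *
        ∏ ℓ₂ ∈ Finset.Icc (ℓ₁ + 1) (K - 2), (ℓ₂ : ℝ) / (2 * ℓ₂ + 1))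
      < (3 / 2) *
          (∑ ℓ ∈ Finset.range (K - 3 + 1),
            ((K : ℝ) - ℓ - 1) / (((K : ℝ) - ℓ) * 2 ^ (K - ℓ)))
        + ((K : ℝ) - 2) / (5 * ((K : ℝ) - 1) * 2 ^ K) := by
  have hrange {ℓ : ℕ} (hℓ : ℓ ∈ range (K - 3 + 1)) : ℓ + 3 ≤ K := by
    rw [mem_range] at hℓ; omega
  have h0 : 0 ∈ range (K - 3 + 1) := by simp
  refine ⟨?_, ?_⟩
  · rw [mul_sum]
    exact sum_lt_sum_of_nonempty ⟨0, h0⟩ fun ℓ hℓ => lambdaSummand_lt_psiSummand (hrange hℓ)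
  · set slack : ℝ := ((K : ℝ) - 2) / (5 * ((K : ℝ) - 1) * 2 ^ K)
    have hslack : 0 ≤ slack := by
      have : (3 : ℝ) ≤ K := by exact_mod_cast hK
      exact div_nonneg (by linarith) (mul_nonneg (by linarith) (by positivity))
    calc ∑ ℓ ∈ range (K - 3 + 1), psiSummand K ℓ
        < ∑ ℓ ∈ range (K - 3 + 1), (3 / 2 * gammaSummand K ℓ + if ℓ = 1 then slack else 0) := by
          refine sum_lt_sum (fun ℓ hℓ => ?_)
            ⟨0, h0, by simpa using psiSummand_lt_gammaSummand hK zero_ne_one⟩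
          rcases eq_or_ne ℓ 1 with rfl | hℓ1
          · simpa using psiSummand_one_le (hrange hℓ)
          · simpa [hℓ1] using (psiSummand_lt_gammaSummand (hrange hℓ) hℓ1).le
      _ = 3 / 2 * ∑ ℓ ∈ range (K - 3 + 1), gammaSummand K ℓ +
            if 1 ∈ range (K - 3 + 1) then slack else 0 := by
          rw [sum_add_distrib, mul_sum, sum_ite_eq']
      _ ≤ 3 / 2 * ∑ ℓ ∈ range (K - 3 + 1), gammaSummand K ℓ + slack := by
          gcongr
          split_ifs <;> linarith
end

section
/- The limit as K → ∞ of Ψ(K) = ∑_{ℓ₁=0}^{K−3} [(K−ℓ₁−1)(3ℓ₁²+ℓ₁−1)] / [2(K−ℓ₁)(4ℓ₁²−1)] · ∏_{ℓ₂=ℓ₁+1}^{K−2} ℓ₂/(2ℓ₂+1) equals 21/16 − (3/2)·ln 2. -/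
/-!
Index the summands from the top, `ℓ₁ = K - 3 - i`. For fixed `i`, as `K → ∞`, the rational
factor in `ℓ₁` tends to `3/4` and each of the `i + 1` factors `ℓ₂/(2ℓ₂+1)` tends to `1/2`, so the
`i`-th summand tends to `(i+2)/(2(i+3)) · 3/4 · 2^{-(i+1)}`. The rational factor lies in `[0, 1]`
and all other factors in `[0, 1/2]`, so the `i`-th summand is bounded by `2^{-(i+2)}` uniformly
in `K`, and Tannery's theorem passes to the limit termwise. With `x = 1/2` the limit series is
`3/2 ∑_{j ≥ 3} (x^j - x^j/j) = 3/2 (1/4 - (log 2 - 1/2 - 1/8))`.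
-/

open Filter Finset Topology

lemma tendsto_prod_Ico_add {M : Type*} [CommMonoid M] [TopologicalSpace M] [ContinuousMul M]
    {f : ℕ → M} {a : M} (hf : Tendsto f atTop (𝓝 a)) (n : ℕ) :
    Tendsto (fun m => ∏ k ∈ Ico m (m + n), f k) atTop (𝓝 (a ^ n)) := by
  simpa [prod_Ico_eq_prod_range] using
    tendsto_finsetProd (range n) fun k _ => hf.comp (tendsto_add_atTop_nat k)

noncomputable section

namespace Psi

def factor (n : ℕ) : ℝ := n / (2 * n + 1)

def ratio (ℓ : ℕ) : ℝ := (3 * (ℓ : ℝ) ^ 2 + ℓ - 1) / (4 * (ℓ : ℝ) ^ 2 - 1)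

def term (K ℓ : ℕ) : ℝ :=
  ((K : ℝ) - ℓ - 1) / (2 * ((K : ℝ) - ℓ)) * ratio ℓ * ∏ n ∈ Icc (ℓ + 1) (K - 2), factor n

/-- The summand `ℓ₁ = K - 3 - i`, extended by zero beyond the range of summation. -/
def termFromTop (K i : ℕ) : ℝ := if i + 3 ≤ K then term K (K - 3 - i) else 0

def limitTerm (i : ℕ) : ℝ := (i + 2) / (2 * (i + 3)) * (3 / 4) * (1 / 2) ^ (i + 1)

lemma summand_eq_term (K ℓ : ℕ) :
    ((K : ℝ) - ℓ - 1) * (3 * (ℓ : ℝ) ^ 2 + ℓ - 1) / (2 * ((K : ℝ) - ℓ) * (4 * (ℓ : ℝ) ^ 2 - 1)) *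
      ∏ ℓ₂ ∈ Icc (ℓ + 1) (K - 2), (ℓ₂ : ℝ) / (2 * ℓ₂ + 1) = term K ℓ := by
  rw [term, ratio, mul_div_mul_comm]
  rfl

lemma factor_nonneg (n : ℕ) : 0 ≤ factor n := by
  unfold factor
  positivity

lemma factor_le_half (n : ℕ) : factor n ≤ 1 / 2 := by
  rw [factor, div_le_iff₀ (by positivity)]
  linarith

lemma prod_factor_le (s : Finset ℕ) : ∏ n ∈ s, factor n ≤ (1 / 2) ^ #s := by
  rw [← prod_const]
  exact prod_le_prod (fun n _ => factor_nonneg n) (fun n _ => factor_le_half n)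

lemma ratio_mem_Icc (ℓ : ℕ) : ratio ℓ ∈ Set.Icc 0 1 := by
  rcases Nat.eq_zero_or_pos ℓ with rfl | hℓ
  · norm_num [ratio]
  have hℓ : (1 : ℝ) ≤ ℓ := by exact_mod_cast hℓ
  have hden : 0 < 4 * (ℓ : ℝ) ^ 2 - 1 := by nlinarith
  exact ⟨div_nonneg (by nlinarith) hden.le, (div_le_one hden).mpr (by nlinarith)⟩

lemma abs_term_le {K ℓ : ℕ} (h : ℓ + 2 ≤ K) : |term K ℓ| ≤ (1 / 2) ^ (K - ℓ - 1) := by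
  have hKℓ : (ℓ : ℝ) + 2 ≤ K := by exact_mod_cast h
  have hcoeff_nonneg : 0 ≤ ((K : ℝ) - ℓ - 1) / (2 * ((K : ℝ) - ℓ)) :=
    div_nonneg (by linarith) (by linarith)
  have hcoeff_le : ((K : ℝ) - ℓ - 1) / (2 * ((K : ℝ) - ℓ)) ≤ 1 / 2 := by
    rw [div_le_iff₀ (by linarith)]
    linarith
  have hprod : ∏ n ∈ Icc (ℓ + 1) (K - 2), factor n ≤ (1 / 2) ^ (K - ℓ - 2) := by
    simpa [Nat.card_Icc, show K - 2 + 1 - (ℓ + 1) = K - ℓ - 2 by omega] using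
      prod_factor_le (Icc (ℓ + 1) (K - 2))
  have hprod_nonneg : 0 ≤ ∏ n ∈ Icc (ℓ + 1) (K - 2), factor n :=
    prod_nonneg fun n _ => factor_nonneg n
  obtain ⟨hratio_nonneg, hratio_le⟩ := ratio_mem_Icc ℓ
  rw [term, abs_of_nonneg (mul_nonneg (mul_nonneg hcoeff_nonneg hratio_nonneg) hprod_nonneg)]
  calc _ ≤ 1 / 2 * 1 * (1 / 2) ^ (K - ℓ - 2) :=
        mul_le_mul (mul_le_mul hcoeff_le hratio_le hratio_nonneg (by norm_num)) hprod
          hprod_nonneg (by norm_num)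
    _ = (1 / 2) ^ (K - ℓ - 1) := by
      rw [show K - ℓ - 1 = K - ℓ - 2 + 1 by omega, pow_succ]
      ring

lemma norm_termFromTop_le (K i : ℕ) : ‖termFromTop K i‖ ≤ (1 / 2) ^ (i + 2) := by
  rw [termFromTop, Real.norm_eq_abs]
  split_ifs with h
  · simpa [show K - (K - 3 - i) - 1 = i + 2 by omega] using
      abs_term_le (K := K) (ℓ := K - 3 - i) (by omega)
  · simp

lemma tendsto_factor : Tendsto factor atTop (𝓝 (1 / 2)) := by
  have h := (tendsto_natCast_div_add_atTop (1 / 2 : ℝ)).const_mul (1 / 2)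
  rw [mul_one] at h
  refine h.congr fun n => ?_
  rw [factor]
  field_simp

lemma tendsto_ratio : Tendsto ratio atTop (𝓝 (3 / 4)) := by
  have hcont : Tendsto (fun x : ℝ => (3 + x - x ^ 2) / (4 - x ^ 2)) (𝓝 0) (𝓝 (3 / 4)) := by
    have hc : ContinuousAt (fun x : ℝ => (3 + x - x ^ 2) / (4 - x ^ 2)) 0 := by
      fun_prop (disch := norm_num)
    simpa using hc.tendsto
  refine (hcont.comp tendsto_inv_atTop_nhds_zero_nat).congr' ?_
  filter_upwards [eventually_ne_atTop 0] with ℓ hℓ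
  have hℓ : (1 : ℝ) ≤ ℓ := by exact_mod_cast Nat.one_le_iff_ne_zero.mpr hℓ
  have hden : 4 * (ℓ : ℝ) ^ 2 - 1 ≠ 0 := by nlinarith
  rw [Function.comp_apply, ratio]
  field_simp

lemma tendsto_term_add (i : ℕ) :
    Tendsto (fun m => term (m + i + 3) m) atTop (𝓝 (limitTerm i)) := by
  have hcoeff : ∀ m : ℕ, (((m + i + 3 : ℕ) : ℝ) - m - 1) / (2 * (((m + i + 3 : ℕ) : ℝ) - m)) =
      (i + 2) / (2 * (i + 3)) := by
    intro m
    push_cast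
    ring_nf
  have hIcc : ∀ m, Icc (m + 1) (m + i + 3 - 2) = Ico (m + 1) (m + 1 + (i + 1)) := by
    intro m
    ext
    simp only [mem_Icc, mem_Ico]
    omega
  simp only [term, hcoeff, hIcc]
  exact (tendsto_const_nhds.mul tendsto_ratio).mul
    ((tendsto_prod_Ico_add tendsto_factor (i + 1)).comp (tendsto_add_atTop_nat 1))

lemma tendsto_termFromTop (i : ℕ) : Tendsto (termFromTop · i) atTop (𝓝 (limitTerm i)) := by
  refine ((tendsto_term_add i).comp (tendsto_sub_atTop_nat (i + 3))).congr' ?_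
  filter_upwards [eventually_ge_atTop (i + 3)] with K hK
  simp only [Function.comp_apply, termFromTop, if_pos hK]
  congr 1 <;> omega

lemma sum_term_eq_tsum_termFromTop {K : ℕ} (hK : 3 ≤ K) :
    ∑ ℓ ∈ range (K - 3 + 1), term K ℓ = ∑' i, termFromTop K i := by
  rw [tsum_eq_sum (s := range (K - 3 + 1)), ← sum_range_reflect]
  · refine sum_congr rfl fun i hi => ?_
    rw [mem_range] at hi
    rw [termFromTop, if_pos (by omega), Nat.add_sub_cancel]
  · intro i hi
    rw [mem_range] at hi
    rw [termFromTop, if_neg (by omega)]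

lemma hasSum_limitTerm : HasSum limitTerm (21 / 16 - 3 / 2 * Real.log 2) := by
  have hlog : HasSum (fun n : ℕ => (1 / 2 : ℝ) ^ (n + 1) / (n + 1)) (Real.log 2) := by
    have := Real.hasSum_pow_div_log_of_abs_lt_one (x := 1 / 2) (by norm_num [abs_of_pos])
    rwa [show (1 : ℝ) - 1 / 2 = 2⁻¹ by norm_num, Real.log_inv, neg_neg] at this
  have hlog3 : HasSum (fun i : ℕ => (1 / 2 : ℝ) ^ (i + 3) / (i + 3)) (Real.log 2 - 5 / 8) := by
    have := (hasSum_nat_add_iff' 2).mpr hlog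
    norm_num [sum_range_succ, add_assoc] at this
    exact this
  have hgeo : HasSum (fun i : ℕ => (1 / 2 : ℝ) ^ (i + 3)) (1 / 4) := by
    have := hasSum_geometric_two.mul_left (1 / 8)
    rw [show (1 / 8 : ℝ) * 2 = 1 / 4 by norm_num] at this
    exact this.congr_fun fun i => by ring
  rw [show 21 / 16 - 3 / 2 * Real.log 2 = 3 / 2 * (1 / 4 - (Real.log 2 - 5 / 8)) by ring]
  refine ((hgeo.sub hlog3).mul_left (3 / 2)).congr_fun fun i => ?_
  rw [limitTerm]
  field_simp
  ring

end Psi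

end

open Psi

/-- `lim_{K→∞} Ψ(K) = 21/16 − (3/2)·ln 2`, where
`Ψ(K) = ∑_{ℓ₁=0}^{K−3} (K−ℓ₁−1)(3ℓ₁²+ℓ₁−1)/(2(K−ℓ₁)(4ℓ₁²−1)) · ∏_{ℓ₂=ℓ₁+1}^{K−2} ℓ₂/(2ℓ₂+1)`. -/
theorem stmt_9 :
    Tendsto
      (fun K : ℕ => ∑ ℓ₁ ∈ Finset.range (K - 3 + 1),
        ((K : ℝ) - ℓ₁ - 1) * (3 * (ℓ₁ : ℝ) ^ 2 + ℓ₁ - 1) /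
          (2 * ((K : ℝ) - ℓ₁) * (4 * (ℓ₁ : ℝ) ^ 2 - 1)) *
        ∏ ℓ₂ ∈ Finset.Icc (ℓ₁ + 1) (K - 2), (ℓ₂ : ℝ) / (2 * ℓ₂ + 1))
      atTop (nhds (21 / 16 - (3 / 2) * Real.log 2)) := by
  have hdom := tendsto_tsum_of_dominated_convergence
    ((summable_nat_add_iff (f := fun n => (1 / 2 : ℝ) ^ n) 2).mpr summable_geometric_two)
    tendsto_termFromTop (Eventually.of_forall norm_termFromTop_le)
  rw [← hasSum_limitTerm.tsum_eq]
  refine hdom.congr' ?_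
  filter_upwards [eventually_ge_atTop 3] with K hK
  simp only [summand_eq_term, sum_term_eq_tsum_termFromTop hK]
end

section
/- Let K ≥ 2 be an integer. Define B_{K−i}(K) for 0 ≤ i ≤ K−1 by the recursion B_{K−i}(K) = (i/((K−i+1)(2i+1)))·[(K−i)·B_{K−i+1}(K) + 1] for 1 ≤ i ≤ K−1 with initial condition B_K(K) = 0. Then the closed-form B_{K−i}(K) = ∑_{ℓ=0}^{i−1} [(i−ℓ)(ℓ+1)/((K−ℓ)(2ℓ+1))]·∏_{j=ℓ+1}^{i} j/(2j+1) holds for all 0 ≤ i ≤ K−1. -/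
open Finset

lemma sumA (n : ℕ) : ∑ ℓ ∈ Finset.range (n+1),
    (((ℓ:ℝ)+1)/(2*ℓ+1)) * ∏ j ∈ Finset.Icc (ℓ+1) n, (j:ℝ)/(2*j+1) = 1 := by
  induction n with
  | zero => norm_num
  | succ n ih =>
    rw [Finset.sum_range_succ]
    have key : ∀ ℓ ∈ Finset.range (n+1),
        (((ℓ:ℝ)+1)/(2*ℓ+1)) * ∏ j ∈ Finset.Icc (ℓ+1) (n+1), (j:ℝ)/(2*j+1)
        = ((((ℓ:ℝ)+1)/(2*ℓ+1)) * ∏ j ∈ Finset.Icc (ℓ+1) n, (j:ℝ)/(2*j+1))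
            * (((n:ℝ)+1)/(2*((n:ℝ)+1)+1)) := by
      intro ℓ hℓ
      rw [Finset.mem_range] at hℓ
      rw [Finset.prod_Icc_succ_top (by omega : ℓ + 1 ≤ n + 1)]
      push_cast
      ring
    rw [Finset.sum_congr rfl key, ← Finset.sum_mul, ih, one_mul,
      Finset.Icc_eq_empty (by omega : ¬ (n + 1 + 1 ≤ n + 1)), Finset.prod_empty]
    have h3 : (2*(n:ℝ)+3) ≠ 0 := by positivity
    push_cast
    field_simp
    ring

/-- Closed form for the recursion `B_{K−i}(K)` in the X-channel analysis: if `B 0 = 0`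
(`B i` stands for `B_{K−i}(K)`) and
`B i = (i/((K−i+1)(2i+1)))·[(K−i)·B (i−1) + 1]` for `1 ≤ i ≤ K−1`, then
`B i = ∑_{ℓ=0}^{i−1} (i−ℓ)(ℓ+1)/((K−ℓ)(2ℓ+1)) · ∏_{j=ℓ+1}^{i} j/(2j+1)` for all
`0 ≤ i ≤ K−1`. -/
theorem stmt_12 (K : ℕ) (hK : 2 ≤ K) (B : ℕ → ℝ)
    (h0 : B 0 = 0)
    (hrec : ∀ i : ℕ, 1 ≤ i → i ≤ K - 1 →
      B i = ((i : ℝ) / (((K : ℝ) - i + 1) * (2 * (i : ℝ) + 1))) *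
        (((K : ℝ) - i) * B (i - 1) + 1)) :
    ∀ i : ℕ, i ≤ K - 1 →
      B i = ∑ ℓ ∈ Finset.range i,
          ((i : ℝ) - ℓ) * ((ℓ : ℝ) + 1) / (((K : ℝ) - ℓ) * (2 * (ℓ : ℝ) + 1)) *
          ∏ j ∈ Finset.Icc (ℓ + 1) i, (j : ℝ) / (2 * j + 1) := by
  intro i
  induction i with
  | zero => intro _; simpa using h0
  | succ n ih =>
    intro hn1
    have hBn := ih (le_trans (Nat.le_succ n) hn1)
    have hB := hrec (n+1) (by omega) hn1
    rw [Nat.add_sub_cancel, hBn] at hB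
    rw [hB]
    have hnK : n + 1 < K := by omega
    have hKnR : (n:ℝ) < K := by exact_mod_cast Nat.lt_of_succ_lt hnK
    have hKn : (K:ℝ) - n ≠ 0 := by linarith
    have h3 : (2*(n:ℝ)+3) ≠ 0 := by positivity
    set c : ℝ := ((n:ℝ)+1)/(((K:ℝ)-n)*(2*(n:ℝ)+3)) with hc
    -- rewrite RHS sum termwise
    have key : ∀ ℓ ∈ Finset.range (n+1),
        ((((n:ℕ)+1 : ℕ) : ℝ) - ℓ) * ((ℓ : ℝ) + 1) / (((K : ℝ) - ℓ) * (2 * (ℓ : ℝ) + 1)) *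
          ∏ j ∈ Finset.Icc (ℓ + 1) (n+1), (j : ℝ) / (2 * j + 1)
        = c * ((K:ℝ) - n - 1) *
            (((n : ℝ) - ℓ) * ((ℓ : ℝ) + 1) / (((K : ℝ) - ℓ) * (2 * (ℓ : ℝ) + 1)) *
              ∏ j ∈ Finset.Icc (ℓ + 1) n, (j : ℝ) / (2 * j + 1))
          + c * ((((ℓ:ℝ)+1)/(2*ℓ+1)) * ∏ j ∈ Finset.Icc (ℓ+1) n, (j:ℝ)/(2*j+1)) := by
      intro ℓ hℓ
      rw [Finset.mem_range] at hℓ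
      have hℓK : (ℓ:ℝ) < K := by
        exact_mod_cast (by omega : ℓ < K)
      have hKℓ : (K:ℝ) - ℓ ≠ 0 := by linarith
      have h2ℓ : (2*(ℓ:ℝ)+1) ≠ 0 := by positivity
      rw [Finset.prod_Icc_succ_top (by omega : ℓ + 1 ≤ n + 1), hc]
      push_cast
      field_simp
      ring
    rw [Finset.sum_congr rfl key, Finset.sum_add_distrib, ← Finset.mul_sum, ← Finset.mul_sum,
      sumA n, mul_one]
    have htop : ∑ ℓ ∈ Finset.range (n+1),
        (((n : ℝ) - ℓ) * ((ℓ : ℝ) + 1) / (((K : ℝ) - ℓ) * (2 * (ℓ : ℝ) + 1)) *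
          ∏ j ∈ Finset.Icc (ℓ + 1) n, (j : ℝ) / (2 * j + 1))
        = ∑ ℓ ∈ Finset.range n,
        (((n : ℝ) - ℓ) * ((ℓ : ℝ) + 1) / (((K : ℝ) - ℓ) * (2 * (ℓ : ℝ) + 1)) *
          ∏ j ∈ Finset.Icc (ℓ + 1) n, (j : ℝ) / (2 * j + 1)) := by
      rw [Finset.sum_range_succ]
      simp
    rw [htop]
    set s : ℝ := ∑ ℓ ∈ Finset.range n,
        (((n : ℝ) - ℓ) * ((ℓ : ℝ) + 1) / (((K : ℝ) - ℓ) * (2 * (ℓ : ℝ) + 1)) *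
          ∏ j ∈ Finset.Icc (ℓ + 1) n, (j : ℝ) / (2 * j + 1))
    rw [hc]
    push_cast
    have hA : ((K:ℝ) - ((n:ℝ) + 1) + 1) ≠ 0 := by intro h; exact hKn (by linarith)
    have hBp : (2*((n:ℝ)+1)+1) ≠ 0 := by positivity
    field_simp
    ring
end

section
/- Let i ≥ 1 be an integer and suppose a sequence (b_n)_{n≥1} of reals satisfies b_i = i/(2i+1) − ∑_{ℓ=0}^{i−2} b_{ℓ+1}·∏_{j=ℓ+2}^{i} j/(2j+1) for all i ≥ 1 (with the empty sum equal to 0). Then b_i = i²/(4i²−1) for all i ≥ 1. -/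
open Finset

section Recurrence

variable {R : Type*}

lemma sum_range_mul_prod_Icc_succ_top [CommSemiring R] (b w : ℕ → R) (n : ℕ) :
    ∑ ℓ ∈ range (n + 1), b (ℓ + 1) * ∏ j ∈ Icc (ℓ + 2) (n + 2), w j =
      (∑ ℓ ∈ range n, b (ℓ + 1) * ∏ j ∈ Icc (ℓ + 2) (n + 1), w j + b (n + 1)) * w (n + 2) := by
  rw [sum_range_succ, add_mul, sum_mul, Icc_self, prod_singleton]
  congr 1
  refine sum_congr rfl fun ℓ hℓ => ?_
  rw [prod_Icc_succ_top (by simp at hℓ; omega), mul_assoc]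

/-- Subtracting `w (n + 2)` times the recurrence at `n + 1` from the one at `n + 2` telescopes the
sum away, leaving a two-term formula. -/
theorem eq_sub_mul_of_forall_eq_sub_sum [CommRing R] (b c w : ℕ → R) (hc : c 0 = 0)
    (hrec : ∀ i, 1 ≤ i →
      b i = c i - ∑ ℓ ∈ range (i - 1), b (ℓ + 1) * ∏ j ∈ Icc (ℓ + 2) i, w j) (n : ℕ) :
    b (n + 1) = c (n + 1) - c n * w (n + 1) := by
  cases n with
  | zero => simpa [hc] using hrec 1 le_rfl
  | succ n =>
    have hcur := hrec (n + 1) (by omega)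
    have hnext := hrec (n + 2) (by omega)
    rw [Nat.add_sub_cancel] at hcur
    rw [show n + 2 - 1 = n + 1 by omega, sum_range_mul_prod_Icc_succ_top] at hnext
    linear_combination hnext - w (n + 2) * hcur

end Recurrence

lemma succ_div_two_mul_add_one_mul_one_sub (n : ℕ) :
    ((n + 1 : ℕ) : ℝ) / (2 * ((n + 1 : ℕ) : ℝ) + 1) * (1 - (n : ℝ) / (2 * n + 1)) =
      ((n + 1 : ℕ) : ℝ) ^ 2 / (4 * ((n + 1 : ℕ) : ℝ) ^ 2 - 1) := by
  have h : (4 : ℝ) * ((n : ℝ) + 1) ^ 2 - 1 = (2 * n + 1) * (2 * (n + 1) + 1) := by ring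
  push_cast
  rw [h]
  field_simp
  ring

/-- If a real sequence `(b_n)` satisfies, for all `i ≥ 1`,
`b_i = i/(2i+1) − ∑_{ℓ=0}^{i−2} b_{ℓ+1}·∏_{j=ℓ+2}^{i} j/(2j+1)` (empty sum `= 0`),
then `b_i = i²/(4i²−1)` for all `i ≥ 1`. -/
theorem stmt_19 (b : ℕ → ℝ)
    (hrec : ∀ i : ℕ, 1 ≤ i →
      b i = (i : ℝ) / (2 * (i : ℝ) + 1) -
        ∑ ℓ ∈ Finset.range (i - 1),
          b (ℓ + 1) * ∏ j ∈ Finset.Icc (ℓ + 2) i, (j : ℝ) / (2 * j + 1)) :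
    ∀ i : ℕ, 1 ≤ i → b i = (i : ℝ) ^ 2 / (4 * (i : ℝ) ^ 2 - 1) := by
  intro i hi
  obtain ⟨n, rfl⟩ := Nat.exists_eq_add_of_le' hi
  rw [eq_sub_mul_of_forall_eq_sub_sum b _ _ (by simp) hrec n,
    ← succ_div_two_mul_add_one_mul_one_sub]
  ring
end
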